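/- For any real-linear map A : C₀ → C₀^⊥, the symplectic orthogonal of the graph C_A is exactly (C_A)^ω = { (x_ξ, ξ + i·Bᵀξ) : ξ ∈ ℝ^{n−k} } ⊆ ℂ^k × ℂ^{n−k}; that is, an element (ξ_H, ξ_I + iζ) with ξ_I, ζ ∈ ℝ^{n−k} lies in (C_A)^ω if and only if ξ_H = x_{ξ_I} and ζ = Bᵀ ξ_I. -/

import Mathlib

noncomputable section

/-- The standard symplectic form `ω(u,v) = Re⟨iu,v⟩` on `ℂ^ι`, with the Hermitian
inner product `⟨u,v⟩ = ∑ u_j * conj v_j`. -/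
def omegaV {ι : Type*} [Fintype ι] (u v : ι → ℂ) : ℝ :=
  ∑ j, (Complex.I * u j * (starRingEnd ℂ) (v j)).re

/-- The symplectic form on `ℂⁿ = ℂ^k × ℂ^m`. -/
def omegaF {k m : ℕ} (p q : (Fin k → ℂ) × (Fin m → ℂ)) : ℝ :=
  omegaV p.1 q.1 + omegaV p.2 q.2

/-- The graph `C_A = {x + A(x) : x ∈ C₀}` of the linear map `A : C₀ → C₀^⊥`,
`A(v_H, v_I) = i·a(v_H) + i·B v_I`, over the model coisotropic subspace
`C₀ = ℂ^k × ℝ^m`. -/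
def graphCA {k m : ℕ} (a : (Fin k → ℂ) →ₗ[ℝ] (Fin m → ℝ))
    (B : Matrix (Fin m) (Fin m) ℝ) : Set ((Fin k → ℂ) × (Fin m → ℂ)) :=
  {p | ∃ (v : Fin k → ℂ) (ξ : Fin m → ℝ),
    p = (v, fun j => (ξ j : ℂ) + Complex.I * ((a v j : ℝ) + (B.mulVec ξ j : ℝ)))}

/-- The symplectic orthogonal of a set `S ⊆ ℂ^k × ℂ^m`. -/
def sOrthF {k m : ℕ} (S : Set ((Fin k → ℂ) × (Fin m → ℂ))) :
    Set ((Fin k → ℂ) × (Fin m → ℂ)) :=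
  {q | ∀ p ∈ S, omegaF p q = 0}

/-! Write `q = (q₁, s + i t)` with `s, t ∈ ℝ^m`. Pairing `q` with the graph point
`(v, ξ + i (a v + B ξ))` gives `(ω(v, q₁) - a(v)·s) + ξ·(t - Bᵀ s)`, a sum of a term depending
only on `v` and a term linear in `ξ`. It vanishes for all `v, ξ` iff `ω(v, q₁) = a(v)·s = ω(v, x_s)`
for every `v`, which by nondegeneracy of `ω` means `q₁ = x_s`, and `t = Bᵀ s`. -/

open Matrix

lemma omegaV_eq_dotProduct {ι : Type*} [Fintype ι] (u w : ι → ℂ) :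
    omegaV u w =
      (Complex.re ∘ u) ⬝ᵥ (Complex.im ∘ w) - (Complex.im ∘ u) ⬝ᵥ (Complex.re ∘ w) := by
  simp only [omegaV, dotProduct, ← Finset.sum_sub_distrib, Function.comp_apply]
  refine Finset.sum_congr rfl fun j _ => ?_
  simp only [Complex.mul_re, Complex.mul_im, Complex.I_re, Complex.I_im, Complex.conj_re,
    Complex.conj_im]
  ring

lemma omegaV_sub_right {ι : Type*} [Fintype ι] (u w w' : ι → ℂ) :
    omegaV u (w - w') = omegaV u w - omegaV u w' := by
  simp only [omegaV, Pi.sub_apply, map_sub, mul_sub, Complex.sub_re, Finset.sum_sub_distrib]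

lemma omegaV_I_mul_self {ι : Type*} [Fintype ι] (w : ι → ℂ) :
    omegaV (fun j => Complex.I * w j) w = -∑ j, Complex.normSq (w j) := by
  simp [omegaV, mul_assoc, Complex.mul_conj]

lemma forall_omegaV_eq_iff {ι : Type*} [Fintype ι] {w w' : ι → ℂ} :
    (∀ v, omegaV v w = omegaV v w') ↔ w = w' := by
  refine ⟨fun h => ?_, fun h _ => h ▸ rfl⟩
  have hsq := h fun j => Complex.I * (w - w') j
  rw [← sub_eq_zero, ← omegaV_sub_right, omegaV_I_mul_self, neg_eq_zero,
    Finset.sum_eq_zero_iff_of_nonneg fun j _ => Complex.normSq_nonneg _] at hsq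
  funext j
  exact sub_eq_zero.mp (Complex.normSq_eq_zero.mp (hsq j (Finset.mem_univ j)))

lemma eq_ofReal_add_I_mul_iff {ι : Type*} {w : ι → ℂ} {ξ η : ι → ℝ} :
    (w = fun j => (ξ j : ℂ) + Complex.I * η j) ↔
      Complex.re ∘ w = ξ ∧ Complex.im ∘ w = η := by
  constructor
  · rintro rfl
    constructor <;> funext j <;> simp
  · rintro ⟨rfl, rfl⟩
    funext j
    simp [mul_comm Complex.I, Complex.re_add_im]

lemma forall_add_dotProduct_eq_zero_iff {V ι R : Type*} [Nonempty V] [Fintype ι] [Ring R]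
    [LinearOrder R] [IsStrictOrderedRing R] (f : V → R) (w : ι → R) :
    (∀ v ξ, f v + ξ ⬝ᵥ w = 0) ↔ (∀ v, f v = 0) ∧ w = 0 := by
  refine ⟨fun h => ?_, fun ⟨hf, hw⟩ v ξ => by simp [hf, hw]⟩
  have hf : ∀ v, f v = 0 := fun v => by simpa using h v 0
  obtain ⟨v⟩ := ‹Nonempty V›
  exact ⟨hf, dotProduct_self_eq_zero.mp (by simpa [hf] using h v w)⟩

lemma omegaF_graphCA_point {k m : ℕ} (a : (Fin k → ℂ) →ₗ[ℝ] (Fin m → ℝ))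
    (B : Matrix (Fin m) (Fin m) ℝ) (v : Fin k → ℂ) (ξ : Fin m → ℝ)
    (q : (Fin k → ℂ) × (Fin m → ℂ)) :
    omegaF (v, fun j => (ξ j : ℂ) + Complex.I * ((a v j : ℝ) + (B.mulVec ξ j : ℝ))) q =
      (omegaV v q.1 - a v ⬝ᵥ (Complex.re ∘ q.2)) +
        ξ ⬝ᵥ (Complex.im ∘ q.2 - Bᵀ *ᵥ (Complex.re ∘ q.2)) := by
  have hgraph : (fun j => (ξ j : ℂ) + Complex.I * ((a v j : ℝ) + (B.mulVec ξ j : ℝ))) =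
      fun j => (ξ j : ℂ) + Complex.I * ((a v + B *ᵥ ξ) j : ℝ) := by
    simp only [Pi.add_apply, Complex.ofReal_add]
  obtain ⟨hre, him⟩ := eq_ofReal_add_I_mul_iff.mp hgraph
  rw [omegaF, omegaV_eq_dotProduct _ q.2, hre, him, dotProduct_sub, add_dotProduct,
    dotProduct_mulVec, vecMul_transpose, dotProduct_comm ξ]
  ring

lemma mem_sOrthF_graphCA_iff {k m : ℕ} (a : (Fin k → ℂ) →ₗ[ℝ] (Fin m → ℝ))
    (B : Matrix (Fin m) (Fin m) ℝ) (q : (Fin k → ℂ) × (Fin m → ℂ)) :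
    q ∈ sOrthF (graphCA a B) ↔
      ∀ (v : Fin k → ℂ) (ξ : Fin m → ℝ),
        (omegaV v q.1 - a v ⬝ᵥ (Complex.re ∘ q.2)) +
          ξ ⬝ᵥ (Complex.im ∘ q.2 - Bᵀ *ᵥ (Complex.re ∘ q.2)) = 0 := by
  simp only [sOrthF, graphCA, Set.mem_ofPred_eq, forall_exists_index]
  exact ⟨fun h v ξ => omegaF_graphCA_point a B v ξ q ▸ h _ v ξ rfl,
    fun h _ v ξ hp => hp ▸ (omegaF_graphCA_point a B v ξ q).trans (h v ξ)⟩

/-- The symplectic orthogonal of the graph `C_A` is exactly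
`(C_A)^ω = {(x_ξ, ξ + i·Bᵀξ) : ξ ∈ ℝ^m}`, where `x_ξ ∈ ℂ^k` is the unique vector
with `ω(v, x_ξ) = a(v)·ξ` for all `v ∈ ℂ^k`. -/
theorem symplOrth_of_graph (k m : ℕ)
    (a : (Fin k → ℂ) →ₗ[ℝ] (Fin m → ℝ)) (B : Matrix (Fin m) (Fin m) ℝ)
    (x : (Fin m → ℝ) → (Fin k → ℂ))
    (hx : ∀ (ξ : Fin m → ℝ) (v : Fin k → ℂ), omegaV v (x ξ) = ∑ j, a v j * ξ j) :
    sOrthF (graphCA a B) =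
      {p | ∃ ξ : Fin m → ℝ,
        p = (x ξ, fun j => (ξ j : ℂ) + Complex.I * (B.transpose.mulVec ξ j : ℝ))} := by
  ext ⟨q₁, q₂⟩
  have hx' : ∀ v, a v ⬝ᵥ (Complex.re ∘ q₂) = omegaV v (x (Complex.re ∘ q₂)) :=
    fun v => (hx _ v).symm
  simp only [mem_sOrthF_graphCA_iff, forall_add_dotProduct_eq_zero_iff, sub_eq_zero, hx',
    forall_omegaV_eq_iff, Set.mem_ofPred_eq, Prod.mk.injEq, eq_ofReal_add_I_mul_iff]
  exact ⟨fun h => ⟨_, h.1, rfl, h.2⟩, fun ⟨_, h₁, hre, h₂⟩ => hre ▸ ⟨h₁, h₂⟩⟩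

end
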